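/- Let u ∈ Z¹(PSL(2,ℤ), N) be a 1-cocycle with u(τ) = 1. Then for every a ∈ ℙ¹(ℚ) the restriction of u to the stabilizer Stab(a) of a in PSL(2,ℤ) is trivial (i.e. there exists n ∈ N with u(k) = n⁻¹·(k•n) for all k ∈ Stab(a)) if and only if there exists n ∈ N with u(σ) = n⁻¹·((στ)•n). -/

import Mathlib

/-- A 1-cocycle of `G` in a (possibly noncommutative) group `N` on which `G`
acts on the left by group automorphisms: `u (g₁ * g₂) = u g₁ * g₁ • u g₂`. -/
def IsCocycle {G N : Type*} [Group G] [Group N] [MulDistribMulAction G N]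
    (u : G → N) : Prop :=
  ∀ g₁ g₂ : G, u (g₁ * g₂) = u g₁ * g₁ • u g₂

/-- Two maps `u v : G → N` are cohomologous if there is `n : N` with
`v g = n⁻¹ * u g * g • n` for all `g`. -/
def Cohomologous {G N : Type*} [Group G] [Group N] [MulDistribMulAction G N]
    (u v : G → N) : Prop :=
  ∃ n : N, ∀ g : G, v g = n⁻¹ * u g * g • n

/-- The group `SL(2,ℤ)`. -/
abbrev SL2Z := Matrix.SpecialLinearGroup (Fin 2) ℤ

/-- The group `PSL(2,ℤ)`, the quotient of `SL(2,ℤ)` by its center `{±1}`. -/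
abbrev PSL2Z := SL2Z ⧸ Subgroup.center SL2Z

/-- The image `σ` of the matrix `((0,-1),(1,0))` in `PSL(2,ℤ)`. -/
def pslSigma : PSL2Z :=
  QuotientGroup.mk ⟨!![0, -1; 1, 0], by norm_num [Matrix.det_fin_two_of]⟩

/-- The image `τ` of the matrix `((0,-1),(1,-1))` in `PSL(2,ℤ)`. -/
def pslTau : PSL2Z :=
  QuotientGroup.mk ⟨!![0, -1; 1, -1], by norm_num [Matrix.det_fin_two_of]⟩

/-- The projective line `ℙ¹(ℚ) = ℚ ∪ {∞}`, realized as the projectivization of `ℚ²`. -/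
abbrev P1Q := Projectivization ℚ (Fin 2 → ℚ)

/-- The linear automorphism of `ℚ²` attached to an element of `SL(2,ℤ)`. -/
noncomputable def sl2ToLin : SL2Z →* (Fin 2 → ℚ) ≃ₗ[ℚ] (Fin 2 → ℚ) :=
  (Matrix.SpecialLinearGroup.toLin').comp
    (Matrix.SpecialLinearGroup.map (Int.castRingHom ℚ))

/-- The linear action of `SL(2,ℤ)` on the projective line (which is the Möbius
action in the affine coordinate `z = x/y`). -/
noncomputable instance instSL2ZP1Q : MulAction SL2Z P1Q where
  smul g x := Projectivization.map (sl2ToLin g).toLinearMap (sl2ToLin g).injective x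
  one_smul x := by
    induction x using Projectivization.ind with
    | h v hv =>
      show Projectivization.map _ _ _ = _
      rw [Projectivization.map_mk]
      have h1 : (sl2ToLin 1).toLinearMap v = v := by simp
      exact (Projectivization.mk_eq_mk_iff ℚ _ _ _ hv).2 ⟨1, by simp [h1]⟩
  mul_smul g h x := by
    induction x using Projectivization.ind with
    | h v hv =>
      show Projectivization.map _ _ _ =
        Projectivization.map _ _ (Projectivization.map _ _ _)
      rw [Projectivization.map_mk, Projectivization.map_mk, Projectivization.map_mk]
      have h1 : (sl2ToLin (g * h)).toLinearMap v
          = (sl2ToLin g).toLinearMap ((sl2ToLin h).toLinearMap v) := by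
        simp [map_mul]
      exact (Projectivization.mk_eq_mk_iff ℚ _ _ _ _).2 ⟨1, by simp [h1]⟩

lemma center_smul_triv (z : SL2Z) (hz : z ∈ Subgroup.center SL2Z) (x : P1Q) :
    z • x = x := by
  obtain ⟨r, hr2, hrz⟩ := Matrix.SpecialLinearGroup.mem_center_iff.mp hz
  rw [Fintype.card_fin] at hr2
  have hrr : (r : ℚ) * (r : ℚ) = 1 := by
    have := congrArg (fun t : ℤ => (t : ℚ)) hr2
    push_cast at this
    nlinarith [this]
  induction x using Projectivization.ind with
  | h v hv =>
    show Projectivization.map _ _ _ = _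
    rw [Projectivization.map_mk]
    have hval : (sl2ToLin z).toLinearMap v = (r : ℚ) • v := by
      show (sl2ToLin z) v = _
      have hmat : (z : Matrix (Fin 2) (Fin 2) ℤ) = Matrix.scalar (Fin 2) r := hrz.symm
      simp only [sl2ToLin, MonoidHom.comp_apply,
        Matrix.SpecialLinearGroup.toLin'_apply, Matrix.toLin'_apply,
        Matrix.SpecialLinearGroup.map_apply_coe, hmat]
      rw [Matrix.scalar_apply]
      ext i
      fin_cases i <;> simp [Matrix.mulVec, dotProduct, Matrix.diagonal, RingHom.mapMatrix_apply,
        Fin.sum_univ_two]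
    exact (Projectivization.mk_eq_mk_iff ℚ _ _ _ hv).2
      ⟨⟨(r : ℚ), (r : ℚ), hrr, hrr⟩, by rw [Units.smul_def]; exact hval.symm⟩

/-- The Möbius action of `PSL(2,ℤ)` on the projective line `ℙ¹(ℚ)`. -/
noncomputable instance instPSL2ZP1Q : MulAction PSL2Z P1Q where
  smul g x := Quotient.liftOn' g (fun s : SL2Z => s • x)
    (fun a b hab => by
      have h : a⁻¹ * b ∈ Subgroup.center SL2Z := QuotientGroup.leftRel_apply.mp hab
      calc a • x = a • ((a⁻¹ * b) • x) := by rw [center_smul_triv _ h]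
        _ = (a * (a⁻¹ * b)) • x := (mul_smul _ _ _).symm
        _ = b • x := by rw [mul_inv_cancel_left])
  one_smul x := one_smul SL2Z x
  mul_smul g h x := by
    refine QuotientGroup.induction_on g (fun a => QuotientGroup.induction_on h (fun b => ?_))
    show (a * b) • x = a • (b • x)
    exact mul_smul a b x
section Helpers

variable {G N : Type*} [Group G] [Group N] [MulDistribMulAction G N]

lemma cocycle_one (u : G → N) (hu : IsCocycle u) : u 1 = 1 := by
  simpa using hu 1 1

lemma cocycle_inv (u : G → N) (hu : IsCocycle u) (g : G) :
    u g⁻¹ = g⁻¹ • (u g)⁻¹ := by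
  have h := hu g g⁻¹
  rw [mul_inv_cancel, cocycle_one u hu] at h
  have h2 : g • u g⁻¹ = (u g)⁻¹ := (inv_eq_of_mul_eq_one_right h.symm).symm
  calc u g⁻¹ = g⁻¹ • (g • u g⁻¹) := by rw [smul_smul, inv_mul_cancel, one_smul]
    _ = g⁻¹ • (u g)⁻¹ := by rw [h2]

lemma cocycle_zpow (u : G → N) (hu : IsCocycle u) (h : G) (n : N)
    (hh : u h = n⁻¹ * h • n) (m : ℤ) : u (h ^ m) = n⁻¹ * (h ^ m) • n := by
  set v : G → N := fun g => n * u g * g • n⁻¹ with hv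
  have hvc : IsCocycle v := by
    intro g₁ g₂
    simp only [hv, hu g₁ g₂, smul_mul', smul_smul, smul_inv']
    group
  have hvh : v h = 1 := by
    simp only [hv, hh, smul_inv']
    group
  have key : ∀ m : ℤ, v (h ^ m) = 1 := by
    have hnat : ∀ k : ℕ, v (h ^ k) = 1 := by
      intro k
      induction k with
      | zero => simpa using cocycle_one v hvc
      | succ k ih => rw [pow_succ, hvc, ih, hvh]; simp
    intro m
    rcases le_or_gt 0 m with hm | hm
    · lift m to ℕ using hm; rw [zpow_natCast]; exact hnat m
    · have heq : h ^ m = (h ^ (-m).toNat)⁻¹ := by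
        rw [← zpow_natCast, Int.toNat_of_nonneg (by omega), ← zpow_neg, neg_neg]
      rw [heq, cocycle_inv v hvc, hnat]; simp
  have hm := key m
  simp only [hv] at hm
  have : u (h ^ m) = n⁻¹ * (1 : N) * ((h ^ m) • n⁻¹)⁻¹ := by
    rw [← hm]; group
  simpa [smul_inv'] using this

/-- transport a coboundary identity along conjugation -/
lemma cocycle_conj (u : G → N) (hu : IsCocycle u) (g h : G) (n : N)
    (hh : u h = n⁻¹ * h • n) :
    u (g * h * g⁻¹) = ((g • n) * (u g)⁻¹)⁻¹ * (g * h * g⁻¹) • ((g • n) * (u g)⁻¹) := by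
  have e1 : u (g * h * g⁻¹) = u g * g • u h * (g * h) • u g⁻¹ := by
    rw [hu (g * h) g⁻¹, hu g h, mul_smul]
  rw [e1, cocycle_inv u hu g, hh]
  simp only [smul_mul', smul_inv', smul_smul, mul_inv_rev, inv_inv]
  group

end Helpers
section Geom

noncomputable def ptInf : P1Q := Projectivization.mk ℚ ![1, 0] (by
  intro h; have := congrFun h 0; simp at this)

lemma sl2_apply (M : SL2Z) (v : Fin 2 → ℚ) :
    sl2ToLin M v = (M.val.map (Int.cast : ℤ → ℚ)).mulVec v := by
  simp [sl2ToLin, Matrix.SpecialLinearGroup.toLin'_apply, Matrix.toLin'_apply]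

lemma mulVec_ne_zero (M : SL2Z) (v : Fin 2 → ℚ) (hv : v ≠ 0) :
    (M.val.map (Int.cast : ℤ → ℚ)).mulVec v ≠ 0 := by
  rw [← sl2_apply]
  exact (map_ne_zero_iff _ (sl2ToLin M).injective).mpr hv

lemma psl_smul_mk (M : SL2Z) (v : Fin 2 → ℚ) (hv : v ≠ 0) :
    (QuotientGroup.mk M : PSL2Z) • Projectivization.mk ℚ v hv =
      Projectivization.mk ℚ ((M.val.map (Int.cast : ℤ → ℚ)).mulVec v)
        (mulVec_ne_zero M v hv) := by
  have h0 : (QuotientGroup.mk M : PSL2Z) • Projectivization.mk ℚ v hv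
      = M • Projectivization.mk ℚ v hv := rfl
  rw [h0]
  show Projectivization.map (sl2ToLin M).toLinearMap (sl2ToLin M).injective _ = _
  rw [Projectivization.map_mk]
  congr 1

end Geom
section Trans

lemma exists_sl2_coprime (p q : ℤ) (hpq : IsCoprime p q) :
    ∃ M : SL2Z, (M.val.map (Int.cast : ℤ → ℚ)).mulVec ![1, 0] = ![(p : ℚ), (q : ℚ)] := by
  obtain ⟨a, b, hab⟩ := hpq
  refine ⟨⟨!![p, -b; q, a], by simp [Matrix.det_fin_two_of]; linarith⟩, ?_⟩
  funext i
  fin_cases i <;>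
    simp [Matrix.mulVec, dotProduct, Fin.sum_univ_two, Matrix.map_apply]

lemma psl_transitive (x : P1Q) : ∃ g : SL2Z, (QuotientGroup.mk g : PSL2Z) • ptInf = x := by
  induction x using Projectivization.ind with
  | h v hv =>
    set x0 : ℤ := (v 0).num * ((v 1).den : ℤ) with hx0
    set y0 : ℤ := (v 1).num * ((v 0).den : ℤ) with hy0
    set D : ℚ := ((v 0).den : ℚ) * ((v 1).den : ℚ) with hD
    have hD0 : D ≠ 0 := by positivity
    have e0 : v 0 * ((v 0).den : ℚ) = ((v 0).num : ℚ) := Rat.mul_den_eq_num _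
    have e1 : v 1 * ((v 1).den : ℚ) = ((v 1).num : ℚ) := Rat.mul_den_eq_num _
    have hvx : (x0 : ℚ) = D * v 0 := by
      rw [hx0, hD]; push_cast; rw [← e0]; ring
    have hvy : (y0 : ℚ) = D * v 1 := by
      rw [hy0, hD]; push_cast; rw [← e1]; ring
    have hxy0 : ¬(x0 = 0 ∧ y0 = 0) := by
      rintro ⟨h1, h2⟩
      apply hv
      have hv0 : v 0 = 0 := by
        have : (x0 : ℚ) = 0 := by exact_mod_cast h1
        rw [hvx] at this
        exact (mul_eq_zero.mp this).resolve_left hD0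
      have hv1 : v 1 = 0 := by
        have : (y0 : ℚ) = 0 := by exact_mod_cast h2
        rw [hvy] at this
        exact (mul_eq_zero.mp this).resolve_left hD0
      funext i; fin_cases i <;> assumption
    set g : ℕ := Int.gcd x0 y0 with hg
    have hg0 : (g : ℤ) ≠ 0 := by
      simp only [hg, ne_eq, Int.natCast_eq_zero, Int.gcd_eq_zero_iff]
      tauto
    set p : ℤ := x0 / g with hp
    set q : ℤ := y0 / g with hq
    have hdx : (g : ℤ) ∣ x0 := Int.gcd_dvd_left x0 y0
    have hdy : (g : ℤ) ∣ y0 := Int.gcd_dvd_right x0 y0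
    have hpg : x0 = g * p := (Int.ediv_mul_cancel hdx).symm.trans (mul_comm _ _)
    have hqg : y0 = g * q := (Int.ediv_mul_cancel hdy).symm.trans (mul_comm _ _)
    have hcop : IsCoprime p q := by
      rw [Int.isCoprime_iff_gcd_eq_one]
      exact Int.gcd_div_gcd_div_gcd (Nat.pos_of_ne_zero (by exact_mod_cast hg0))
    obtain ⟨M, hM⟩ := exists_sl2_coprime p q hcop
    refine ⟨M, ?_⟩
    rw [ptInf, psl_smul_mk, Projectivization.mk_eq_mk_iff']
    refine ⟨D / (g : ℚ), ?_⟩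
    rw [hM]
    funext i
    have hgQ : ((g : ℕ) : ℚ) ≠ 0 := by exact_mod_cast hg0
    fin_cases i
    · show D / (g : ℚ) * v 0 = (p : ℚ)
      rw [div_mul_eq_mul_div, ← hvx, hpg]
      push_cast
      rw [mul_comm, mul_div_assoc, div_self hgQ, mul_one]
    · show D / (g : ℚ) * v 1 = (q : ℚ)
      rw [div_mul_eq_mul_div, ← hvy, hqg]
      push_cast
      rw [mul_comm, mul_div_assoc, div_self hgQ, mul_one]

end Trans
section Stab

lemma neg_one_mem_center : (-1 : SL2Z) ∈ Subgroup.center SL2Z := by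
  rw [Matrix.SpecialLinearGroup.mem_center_iff]
  exact ⟨-1, by norm_num, by ext i j; simp [Matrix.scalar_apply]⟩

lemma mk_neg (A : SL2Z) : (QuotientGroup.mk (-A) : PSL2Z) = QuotientGroup.mk A := by
  have h : -A = (-1) * A := by simp
  rw [h, QuotientGroup.mk_mul,
    (QuotientGroup.eq_one_iff (-1 : SL2Z)).mpr neg_one_mem_center, one_mul]

lemma sigma_tau_eq : pslSigma * pslTau = QuotientGroup.mk (ModularGroup.T⁻¹ : SL2Z) := by
  rw [show pslSigma * pslTau = QuotientGroup.mk (@HMul.hMul SL2Z SL2Z SL2Z _ ⟨!![0, -1; 1, 0], by norm_num [Matrix.det_fin_two_of]⟩ ⟨!![0, -1; 1, -1], by norm_num [Matrix.det_fin_two_of]⟩) from rfl, ← mk_neg]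
  congr 1
  ext i j
  change (-(!![0, -1; 1, 0] * !![0, -1; 1, -1]) : Matrix (Fin 2) (Fin 2) ℤ) i j = _
  fin_cases i <;> fin_cases j <;>
    simp [Matrix.SpecialLinearGroup.coe_neg, Matrix.SpecialLinearGroup.coe_mul,
      ModularGroup.coe_T_inv, Matrix.mul_apply, Fin.sum_univ_two,
      Matrix.adjugate_fin_two, ModularGroup.coe_T]

/-- every element of the stabilizer of ∞ is a power of στ -/
lemma stab_inf_eq (k : PSL2Z) (hk : k ∈ MulAction.stabilizer PSL2Z ptInf) :
    ∃ m : ℤ, k = (pslSigma * pslTau) ^ m := by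
  induction k using QuotientGroup.induction_on with
  | H M =>
    have hfix : (QuotientGroup.mk M : PSL2Z) • ptInf = ptInf := hk
    rw [ptInf, psl_smul_mk, Projectivization.mk_eq_mk_iff'] at hfix
    obtain ⟨a, ha⟩ := hfix
    have hc : M.val 1 0 = 0 := by
      have := congrFun ha 1
      simp [Matrix.mulVec, dotProduct, Fin.sum_univ_two, Matrix.map_apply] at this
      exact_mod_cast this.symm
    have hdet : M.val 0 0 * M.val 1 1 = 1 := by
      have := M.property
      rw [Matrix.det_fin_two, hc] at this
      linarith
    set b : ℤ := M.val 0 1 with hb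
    rcases Int.mul_eq_one_iff_eq_one_or_neg_one.mp hdet with ⟨h1, h2⟩ | ⟨h1, h2⟩
    · refine ⟨-b, ?_⟩
      have hM : M = ModularGroup.T ^ b := by
        ext i j
        rw [ModularGroup.coe_T_zpow]
        fin_cases i <;> fin_cases j <;> simp [h1, h2, hc, ← hb]
      rw [sigma_tau_eq, hM, ← QuotientGroup.mk_zpow]
      congr 1
      simp [zpow_neg, inv_zpow]
    · refine ⟨b, ?_⟩
      have hM : M = -(ModularGroup.T ^ (-b)) := by
        ext i j
        rw [Matrix.SpecialLinearGroup.coe_neg, ModularGroup.coe_T_zpow]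
        fin_cases i <;> fin_cases j <;> simp [h1, h2, hc, ← hb]
      rw [sigma_tau_eq, hM, mk_neg, ← QuotientGroup.mk_zpow]
      congr 1
      simp [zpow_neg, inv_zpow]

end Stab
lemma sigma_tau_fixes_inf : pslSigma * pslTau ∈ MulAction.stabilizer PSL2Z ptInf := by
  rw [MulAction.mem_stabilizer_iff, sigma_tau_eq, ptInf, psl_smul_mk]
  congr 1
  funext i
  fin_cases i <;>
    simp [ModularGroup.coe_T_inv, Matrix.mulVec, dotProduct,
      Fin.sum_univ_two, Matrix.map_apply, Matrix.adjugate_fin_two, ModularGroup.coe_T]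

theorem cuspidal_iff_of_tau_one {N : Type*} [Group N]
    [MulDistribMulAction PSL2Z N]
    (u : PSL2Z → N) (hu : IsCocycle u) (huτ : u pslTau = 1) :
    (∀ a : P1Q, ∃ n : N, ∀ k ∈ MulAction.stabilizer PSL2Z a, u k = n⁻¹ * k • n) ↔
    (∃ n : N, u pslSigma = n⁻¹ * (pslSigma * pslTau) • n) := by
  have hστ : u (pslSigma * pslTau) = u pslSigma := by
    rw [hu, huτ, smul_one, mul_one]
  constructor
  · intro H
    obtain ⟨n, hn⟩ := H ptInf
    exact ⟨n, by rw [← hστ]; exact hn _ sigma_tau_fixes_inf⟩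
  · rintro ⟨n, hn⟩ a
    obtain ⟨g, hg⟩ := psl_transitive a
    set G : PSL2Z := QuotientGroup.mk g with hG
    refine ⟨(G • n) * (u G)⁻¹, ?_⟩
    intro k hk
    have hkc : k = G * (G⁻¹ * k * G) * G⁻¹ := by group
    have hmem : G⁻¹ * k * G ∈ MulAction.stabilizer PSL2Z ptInf := by
      rw [MulAction.mem_stabilizer_iff, mul_smul, mul_smul, hg,
        MulAction.mem_stabilizer_iff.mp hk, ← hg, ← mul_smul, inv_mul_cancel, one_smul]
    obtain ⟨m, hm⟩ := stab_inf_eq _ hmem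
    have hbase : u (pslSigma * pslTau) = n⁻¹ * (pslSigma * pslTau) • n := by
      rw [hστ]; exact hn
    have hpow := cocycle_zpow u hu _ n hbase m
    rw [← hm] at hpow
    have := cocycle_conj u hu G (G⁻¹ * k * G) n hpow
    rw [← hkc] at this
    exact this
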